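/- Fix the exponential utility u(w) = (1 − e^{−rw})/r with r ≠ 0 and an arbitrary quasiprobability parameter q ∈ ℝ. For any density matrix ρ on ℂ^{d_S} and any unitary U on ℂ^{d_S}, the expected utility equals ⟨u(w)⟩_{ρ,U} = (1/r)(1 − Tr(U ρ̃ U† e^{r H_S})), where ρ̃ = (1/2)(e^{−rq H_S} ρ e^{−r(1−q) H_S} + e^{−r(1−q) H_S} ρ e^{−rq H_S}). -/

import Mathlib

open Matrix BigOperators Finset Kronecker
open scoped ComplexOrder

noncomputable section

namespace Daemonic

/-- The outer product `|x⟩⟨y|` as a matrix. -/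
def ketbra {ι : Type*} [Fintype ι] (x y : ι → ℂ) : Matrix ι ι ℂ :=
  Matrix.vecMulVec x (star y)

/-- A family of vectors is orthonormal. -/
def ONFam {ι κ : Type*} [Fintype ι] [DecidableEq κ] (v : κ → ι → ℂ) : Prop :=
  ∀ i j, star (v i) ⬝ᵥ v j = if i = j then 1 else 0

/-- A density matrix: positive semidefinite with unit trace. -/
def IsDensity {ι : Type*} [Fintype ι] (ρ : Matrix ι ι ℂ) : Prop :=
  ρ.PosSemidef ∧ ρ.trace = 1

/-- The matrix element `⟨x|M|y⟩`. -/
def matElem {ι : Type*} [Fintype ι] (M : Matrix ι ι ℂ) (x y : ι → ℂ) : ℂ :=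
  star x ⬝ᵥ (M *ᵥ y)

/-- The Hamiltonian `H_S = ∑ₖ εₖ |εₖ⟩⟨εₖ|`. -/
def ham {n : ℕ} (ε : Fin n → ℝ) (v : Fin n → Fin n → ℂ) : Matrix (Fin n) (Fin n) ℂ :=
  ∑ k, (ε k : ℂ) • ketbra (v k) (v k)

/-- `e^{t H_S} = ∑ₖ e^{t εₖ} |εₖ⟩⟨εₖ|` (functional calculus in the eigenbasis of `H_S`). -/
def expHam {n : ℕ} (ε : Fin n → ℝ) (v : Fin n → Fin n → ℂ) (t : ℝ) :
    Matrix (Fin n) (Fin n) ℂ :=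
  ∑ k, (Real.exp (t * ε k) : ℂ) • ketbra (v k) (v k)

/-- The expected utility `⟨u(w)⟩_{ρ,U}` for quasiprobability parameter `q`,
with respect to the eigenvalues `ε` and orthonormal eigenvectors `v` of `H_S`. -/
def expUtil {n : ℕ} (u : ℝ → ℝ) (q : ℝ) (ε : Fin n → ℝ) (v : Fin n → Fin n → ℂ)
    (ρ U : Matrix (Fin n) (Fin n) ℂ) : ℝ :=
  ∑ i, ∑ j, ∑ k,
    (matElem ρ (v i) (v j) * matElem Uᴴ (v j) (v k) * matElem U (v k) (v i)).re *
      u (q * ε i + (1 - q) * ε j - ε k)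

/-- The optimal expected utility `𝓤(ρ) = max over unitaries U of ⟨u(w)⟩_{ρ,U}`. -/
def optUtil {n : ℕ} (u : ℝ → ℝ) (q : ℝ) (ε : Fin n → ℝ) (v : Fin n → Fin n → ℂ)
    (ρ : Matrix (Fin n) (Fin n) ℂ) : ℝ :=
  ⨆ U : Matrix.unitaryGroup (Fin n) ℂ, expUtil u q ε v ρ (U : Matrix (Fin n) (Fin n) ℂ)

/-- The exponential utility `u(w) = (1 - e^{-r w})/r`. -/
def expUtility (r : ℝ) : ℝ → ℝ := fun w => (1 - Real.exp (-r * w)) / r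

/-- The partial trace over the ancilla. -/
def ptraceA {dS dA : ℕ} (ρSA : Matrix (Fin dS × Fin dA) (Fin dS × Fin dA) ℂ) :
    Matrix (Fin dS) (Fin dS) ℂ :=
  Matrix.of fun i j => ∑ a, ρSA (i, a) (j, a)

/-- The unnormalized conditional state `Tr_A((I ⊗ Π_a) ρ_SA (I ⊗ Π_a))`, where
`Π_a = |a⟩⟨a|` projects onto the vector `w a` of an orthonormal basis `w` of the ancilla. -/
def condUnnorm {dS dA : ℕ} (w : Fin dA → Fin dA → ℂ)
    (ρSA : Matrix (Fin dS × Fin dA) (Fin dS × Fin dA) ℂ) (a : Fin dA) :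
    Matrix (Fin dS) (Fin dS) ℂ :=
  Matrix.of fun i j => ∑ c, ∑ d, ρSA (i, c) (j, d) * (w a d * star (w a c))

/-- The outcome probability `p_a = Tr((I ⊗ Π_a) ρ_SA)`. -/
def prob {dS dA : ℕ} (w : Fin dA → Fin dA → ℂ)
    (ρSA : Matrix (Fin dS × Fin dA) (Fin dS × Fin dA) ℂ) (a : Fin dA) : ℝ :=
  ((condUnnorm w ρSA a).trace).re

/-- The conditional state `ρ_{S|a}`. -/
def condState {dS dA : ℕ} (w : Fin dA → Fin dA → ℂ)
    (ρSA : Matrix (Fin dS × Fin dA) (Fin dS × Fin dA) ℂ) (a : Fin dA) :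
    Matrix (Fin dS) (Fin dS) ℂ :=
  ((prob w ρSA a : ℂ))⁻¹ • condUnnorm w ρSA a

/-- The daemonic expected utility `𝓤_{{Π_a}}(ρ_SA) = ∑_a p_a 𝓤(ρ_{S|a})`. -/
def daemonicUtil {dS dA : ℕ} (u : ℝ → ℝ) (q : ℝ) (ε : Fin dS → ℝ)
    (v : Fin dS → Fin dS → ℂ) (w : Fin dA → Fin dA → ℂ)
    (ρSA : Matrix (Fin dS × Fin dA) (Fin dS × Fin dA) ℂ) : ℝ :=
  ∑ a, prob w ρSA a * optUtil u q ε v (condState w ρSA a)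

/-- The maximum daemonic gain `δ𝓤(ρ_SA)`, maximizing over all orthonormal bases of the
ancilla (equivalently, over the rows of all unitary matrices). -/
def daemonicGain {dS dA : ℕ} (u : ℝ → ℝ) (q : ℝ) (ε : Fin dS → ℝ)
    (v : Fin dS → Fin dS → ℂ)
    (ρSA : Matrix (Fin dS × Fin dA) (Fin dS × Fin dA) ℂ) : ℝ :=
  (⨆ V : Matrix.unitaryGroup (Fin dA) ℂ,
      daemonicUtil u q ε v (fun a => (V : Matrix (Fin dA) (Fin dA) ℂ) a) ρSA) -
    optUtil u q ε v (ptraceA ρSA)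

/-- The ergotropy of a (possibly unnormalized) state `σ` with respect to a Hamiltonian `H`:
`ℰ_H(σ) = max over unitaries U of (Tr(Hσ) - Tr(H U σ U†))`. -/
def ergotropyH {n : ℕ} (H σ : Matrix (Fin n) (Fin n) ℂ) : ℝ :=
  ⨆ U : Matrix.unitaryGroup (Fin n) ℂ,
    ((H * σ).trace -
      (H * ((U : Matrix (Fin n) (Fin n) ℂ) * σ * (U : Matrix (Fin n) (Fin n) ℂ)ᴴ)).trace).re

/-- A separable bipartite state: a convex combination of product states. -/
def IsSeparable {dS dA : ℕ} (ρSA : Matrix (Fin dS × Fin dA) (Fin dS × Fin dA) ℂ) : Prop :=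
  ∃ (m : ℕ) (p : Fin m → ℝ) (σ : Fin m → Matrix (Fin dS) (Fin dS) ℂ)
    (τ : Fin m → Matrix (Fin dA) (Fin dA) ℂ),
    (∀ k, 0 ≤ p k) ∧ (∑ k, p k = 1) ∧ (∀ k, IsDensity (σ k)) ∧ (∀ k, IsDensity (τ k)) ∧
    ρSA = ∑ k, (p k : ℂ) • (σ k ⊗ₖ τ k)

/-- A classical-quantum state `ρ_SA = ∑ₖ pₖ Pₖ ⊗ ρᴬₖ` with `Pₖ` mutually orthogonal
rank-one projectors summing to the identity. -/
def IsClassicalQuantum {dS dA : ℕ}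
    (ρSA : Matrix (Fin dS × Fin dA) (Fin dS × Fin dA) ℂ) : Prop :=
  ∃ (p : Fin dS → ℝ) (ψ : Fin dS → Fin dS → ℂ) (τ : Fin dS → Matrix (Fin dA) (Fin dA) ℂ),
    (∀ k, 0 ≤ p k) ∧ (∑ k, p k = 1) ∧ ONFam ψ ∧ (∀ k, IsDensity (τ k)) ∧
    ρSA = ∑ k, (p k : ℂ) • (ketbra (ψ k) (ψ k) ⊗ₖ τ k)

/-- The dephasing map associated with an orthonormal basis `v`. -/
def dephase {n : ℕ} (v : Fin n → Fin n → ℂ) (ρ : Matrix (Fin n) (Fin n) ℂ) :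
    Matrix (Fin n) (Fin n) ℂ :=
  ∑ k, ketbra (v k) (v k) * ρ * ketbra (v k) (v k)

/-! Since `u(w) = r⁻¹ (1 - e^{-rw})` and `e^{-rw}` factors over the three energies in the work
value `w = qεᵢ + (1-q)εⱼ - εₖ`, the expected utility is `r⁻¹` times the total quasiprobability
minus the real part of `∑ᵢⱼₖ zᵢⱼₖ e^{-rqεᵢ} e^{-r(1-q)εⱼ} e^{rεₖ}`. In the eigenbasis of `H_S`
this sum is the trace `Tr(U e^{-rqH_S} ρ e^{-r(1-q)H_S} U† e^{rH_S})`, and at exponent `0` it is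
`Tr(UρU†) = 1`. As `ρ` and `e^{tH_S}` are Hermitian, conjugating the trace swaps the two
exponentials around `ρ`, so its real part is the trace taken with the symmetrised state `ρ̃`. -/

/-- The quasiprobability `zᵢⱼₖ` of the work value `q εᵢ + (1 - q) εⱼ - εₖ` in `expUtil`. -/
def quasiprob {n : ℕ} (v : Fin n → Fin n → ℂ) (ρ U : Matrix (Fin n) (Fin n) ℂ)
    (i j k : Fin n) : ℂ :=
  matElem ρ (v i) (v j) * matElem Uᴴ (v j) (v k) * matElem U (v k) (v i)

lemma ketbra_mulVec {ι : Type*} [Fintype ι] (a b y : ι → ℂ) :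
    ketbra a b *ᵥ y = (star b ⬝ᵥ y) • a := by
  ext i
  simp [ketbra, Matrix.mulVec, dotProduct, vecMulVec_apply, Finset.mul_sum, mul_comm,
    mul_left_comm]

lemma ketbra_conjTranspose_self {ι : Type*} [Fintype ι] (a : ι → ℂ) :
    (ketbra a a)ᴴ = ketbra a a := by
  simp [ketbra]

lemma matElem_conjTranspose {ι : Type*} [Fintype ι] (M : Matrix ι ι ℂ) (x y : ι → ℂ) :
    matElem Mᴴ x y = star (matElem M y x) := by
  rw [matElem, matElem, Matrix.mulVec_conjTranspose, star_dotProduct, star_star,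
    dotProduct_mulVec]

section OrthonormalFamily

variable {n : ℕ} {v : Fin n → Fin n → ℂ}

lemma sum_ketbra_self_eq_one (hv : ONFam v) :
    ∑ k, ketbra (v k) (v k) = (1 : Matrix (Fin n) (Fin n) ℂ) := by
  have h1 : (Matrix.of fun x k => v k x)ᴴ * (Matrix.of fun x k => v k x) = 1 := by
    ext i j
    simpa [Matrix.mul_apply, Matrix.one_apply, dotProduct] using hv i j
  have h2 := mul_eq_one_comm.mp h1
  ext x y
  simpa [Matrix.mul_apply, ketbra, vecMulVec_apply, Matrix.sum_apply] using
    congrFun (congrFun h2 x) y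

lemma matElem_mul (hv : ONFam v) (A B : Matrix (Fin n) (Fin n) ℂ) (x y : Fin n → ℂ) :
    matElem (A * B) x y = ∑ k, matElem A x (v k) * matElem B (v k) y := by
  calc matElem (A * B) x y
      = star x ⬝ᵥ A *ᵥ ((∑ k, ketbra (v k) (v k)) *ᵥ (B *ᵥ y)) := by
        rw [sum_ketbra_self_eq_one hv, Matrix.one_mulVec, Matrix.mulVec_mulVec, matElem]
    _ = _ := by
        simp only [Matrix.sum_mulVec, ketbra_mulVec, Matrix.mulVec_sum, Matrix.mulVec_smul,
          dotProduct_sum, dotProduct_smul, smul_eq_mul, matElem]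
        exact Finset.sum_congr rfl fun k _ => mul_comm _ _

lemma trace_eq_sum_matElem (hv : ONFam v) (M : Matrix (Fin n) (Fin n) ℂ) :
    M.trace = ∑ k, matElem M (v k) (v k) := by
  conv_lhs => rw [← Matrix.mul_one M, ← sum_ketbra_self_eq_one hv]
  simp [Finset.mul_sum, Matrix.trace_sum, ketbra, Matrix.mul_vecMulVec, matElem,
    dotProduct_comm]

lemma expHam_mulVec (hv : ONFam v) (ε : Fin n → ℝ) (t : ℝ) (j : Fin n) :
    expHam ε v t *ᵥ v j = (Real.exp (t * ε j) : ℂ) • v j := by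
  simp [expHam, Matrix.sum_mulVec, Matrix.smul_mulVec, ketbra_mulVec, (hv · j)]

lemma expHam_conjTranspose (ε : Fin n → ℝ) (t : ℝ) :
    (expHam ε v t)ᴴ = expHam ε v t := by
  simp only [expHam, Matrix.conjTranspose_sum, Matrix.conjTranspose_smul,
    ketbra_conjTranspose_self, Complex.star_def, Complex.conj_ofReal]

lemma expHam_zero (hv : ONFam v) (ε : Fin n → ℝ) : expHam ε v 0 = 1 := by
  simp [expHam, sum_ketbra_self_eq_one hv]

lemma matElem_mul_expHam (hv : ONFam v) (ε : Fin n → ℝ) (t : ℝ)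
    (A : Matrix (Fin n) (Fin n) ℂ) (x : Fin n → ℂ) (j : Fin n) :
    matElem (A * expHam ε v t) x (v j) = matElem A x (v j) * Real.exp (t * ε j) := by
  rw [matElem, ← Matrix.mulVec_mulVec, expHam_mulVec hv, Matrix.mulVec_smul,
    dotProduct_smul, smul_eq_mul, mul_comm, matElem]

lemma matElem_expHam_mul (hv : ONFam v) (ε : Fin n → ℝ) (t : ℝ)
    (A : Matrix (Fin n) (Fin n) ℂ) (i : Fin n) (y : Fin n → ℂ) :
    matElem (expHam ε v t * A) (v i) y = Real.exp (t * ε i) * matElem A (v i) y := by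
  rw [← Matrix.conjTranspose_conjTranspose (expHam ε v t * A), matElem_conjTranspose,
    Matrix.conjTranspose_mul, expHam_conjTranspose, matElem_mul_expHam hv,
    matElem_conjTranspose, star_mul', star_star, Complex.star_def, Complex.conj_ofReal,
    mul_comm]

end OrthonormalFamily

section Sandwich

variable {n : ℕ} {v : Fin n → Fin n → ℂ} (ε : Fin n → ℝ) (U : Matrix (Fin n) (Fin n) ℂ)

lemma trace_sandwich_expHam_eq_sum (hv : ONFam v) (ρ : Matrix (Fin n) (Fin n) ℂ) (a b c : ℝ) :
    (U * (expHam ε v a * ρ * expHam ε v b) * Uᴴ * expHam ε v c).trace =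
      ∑ i, ∑ j, ∑ k, quasiprob v ρ U i j k * Real.exp (a * ε i + b * ε j + c * ε k) := by
  have hdiag : ∀ k, matElem (U * (expHam ε v a * ρ * expHam ε v b) * Uᴴ * expHam ε v c)
      (v k) (v k) =
        ∑ i, ∑ j, quasiprob v ρ U i j k * Real.exp (a * ε i + b * ε j + c * ε k) := by
    intro k
    rw [matElem_mul_expHam hv, matElem_mul hv, Finset.sum_mul, Finset.sum_comm]
    refine Finset.sum_congr rfl fun i _ => ?_
    rw [matElem_mul hv, Finset.sum_mul, Finset.sum_mul]
    refine Finset.sum_congr rfl fun j _ => ?_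
    rw [matElem_mul_expHam hv, matElem_expHam_mul hv, quasiprob, Real.exp_add, Real.exp_add]
    push_cast
    ring
  rw [trace_eq_sum_matElem hv, Finset.sum_congr rfl fun k _ => hdiag k, Finset.sum_comm]
  exact Finset.sum_congr rfl fun i _ => Finset.sum_comm

lemma star_trace_sandwich_expHam {ρ : Matrix (Fin n) (Fin n) ℂ} (hρ : ρ.IsHermitian)
    (a b c : ℝ) :
    star (U * (expHam ε v a * ρ * expHam ε v b) * Uᴴ * expHam ε v c).trace =
      (U * (expHam ε v b * ρ * expHam ε v a) * Uᴴ * expHam ε v c).trace := by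
  rw [← Matrix.trace_conjTranspose]
  simp only [Matrix.conjTranspose_mul, Matrix.conjTranspose_conjTranspose,
    expHam_conjTranspose, hρ.eq]
  rw [Matrix.trace_mul_comm]
  simp only [Matrix.mul_assoc]

lemma ofReal_re_trace_sandwich_expHam {ρ : Matrix (Fin n) (Fin n) ℂ} (hρ : ρ.IsHermitian)
    (a b c : ℝ) :
    (((U * (expHam ε v a * ρ * expHam ε v b) * Uᴴ * expHam ε v c).trace).re : ℂ) =
      (U * ((1/2 : ℂ) • (expHam ε v a * ρ * expHam ε v b + expHam ε v b * ρ * expHam ε v a)) *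
        Uᴴ * expHam ε v c).trace := by
  rw [Complex.re_eq_add_conj, ← Complex.star_def, star_trace_sandwich_expHam ε U hρ]
  simp only [Matrix.mul_smul, Matrix.smul_mul, Matrix.mul_add, Matrix.add_mul,
    Matrix.trace_smul, Matrix.trace_add, smul_eq_mul]
  ring

lemma sum_quasiprob_eq_one (hv : ONFam v) {ρ : Matrix (Fin n) (Fin n) ℂ} (hρ : ρ.trace = 1)
    (hU : U ∈ Matrix.unitaryGroup (Fin n) ℂ) :
    ∑ i, ∑ j, ∑ k, quasiprob v ρ U i j k = 1 := by
  have hUU : Uᴴ * U = 1 := Matrix.mem_unitaryGroup_iff'.mp hU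
  have h := trace_sandwich_expHam_eq_sum 0 U hv ρ 0 0 0
  simp only [expHam_zero hv, zero_mul, add_zero, Real.exp_zero, Complex.ofReal_one, mul_one,
    Matrix.one_mul] at h
  rw [← h, Matrix.trace_mul_comm, ← Matrix.mul_assoc, hUU, Matrix.one_mul, hρ]

lemma expUtil_expUtility (hv : ONFam v) {ρ : Matrix (Fin n) (Fin n) ℂ} (hρ : ρ.trace = 1)
    (hU : U ∈ Matrix.unitaryGroup (Fin n) ℂ) (r q : ℝ) :
    expUtil (expUtility r) q ε v ρ U = r⁻¹ * (1 -
      ((U * (expHam ε v (-(r * q)) * ρ * expHam ε v (-(r * (1 - q)))) * Uᴴ *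
        expHam ε v r).trace).re) := by
  have hre := congrArg Complex.re (sum_quasiprob_eq_one U hv hρ hU)
  simp only [Complex.re_sum, Complex.one_re] at hre
  rw [trace_sandwich_expHam_eq_sum ε U hv]
  nth_rw 1 [← hre]
  simp only [expUtil, expUtility, Complex.re_sum, Complex.re_mul_ofReal, Finset.mul_sum,
    ← Finset.sum_sub_distrib]
  refine Finset.sum_congr rfl fun i _ => Finset.sum_congr rfl fun j _ =>
    Finset.sum_congr rfl fun k _ => ?_
  rw [quasiprob]
  ring_nf

end Sandwich

theorem stmt16_general {dS : ℕ} (r : ℝ) (q : ℝ)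
    (ε : Fin dS → ℝ)
    (v : Fin dS → Fin dS → ℂ) (hv : ONFam v)
    (ρ : Matrix (Fin dS) (Fin dS) ℂ) (hρ : IsDensity ρ)
    (U : Matrix (Fin dS) (Fin dS) ℂ) (hU : U ∈ Matrix.unitaryGroup (Fin dS) ℂ) :
    ((expUtil (expUtility r) q ε v ρ U : ℝ) : ℂ) =
      ((1/r : ℝ) : ℂ) *
        (1 - (U * ((1/2 : ℂ) • (expHam ε v (-(r * q)) * ρ * expHam ε v (-(r * (1 - q))) +
            expHam ε v (-(r * (1 - q))) * ρ * expHam ε v (-(r * q)))) * Uᴴ *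
          expHam ε v r).trace) := by
  rw [expUtil_expUtility ε U hv hρ.2 hU,
    ← ofReal_re_trace_sandwich_expHam ε U hρ.1.isHermitian]
  push_cast
  ring

/-- for the exponential utility with `r ≠ 0` and arbitrary `q`, the expected
utility equals `(1/r)(1 - Tr(U ρ̃ U† e^{r H_S}))`, where
`ρ̃ = (e^{-rqH_S} ρ e^{-r(1-q)H_S} + e^{-r(1-q)H_S} ρ e^{-rqH_S})/2`. -/
theorem stmt16 {dS : ℕ} (r : ℝ) (hr : r ≠ 0) (q : ℝ)
    (ε : Fin dS → ℝ) (hε : StrictMono ε)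
    (v : Fin dS → Fin dS → ℂ) (hv : ONFam v)
    (ρ : Matrix (Fin dS) (Fin dS) ℂ) (hρ : IsDensity ρ)
    (U : Matrix (Fin dS) (Fin dS) ℂ) (hU : U ∈ Matrix.unitaryGroup (Fin dS) ℂ) :
    ((expUtil (expUtility r) q ε v ρ U : ℝ) : ℂ) =
      ((1/r : ℝ) : ℂ) *
        (1 - (U * ((1/2 : ℂ) • (expHam ε v (-(r * q)) * ρ * expHam ε v (-(r * (1 - q))) +
            expHam ε v (-(r * (1 - q))) * ρ * expHam ε v (-(r * q)))) * Uᴴ *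
          expHam ε v r).trace) :=
  stmt16_general r q ε v hv ρ hρ U hU

end Daemonic
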